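/- For all integers i, j ≥ 0, the number of Schröder paths from (0, 2i) to (2j+1, 2j+1) equals the coefficient of u^i v^{2j+1} in the formal power series expansion over ℚ of 1/(1 − v − uv − uv²). -/

import Mathlib

noncomputable section

/-- A single Schröder step: up `(1,1)`, down `(1,-1)` or horizontal `(2,0)`. -/
def SchroderStep (a b : ℤ × ℤ) : Prop :=
  b - a = (1, 1) ∨ b - a = (1, -1) ∨ b - a = (2, 0)

/-- A Schröder path: consecutive differences are Schröder steps. -/
def IsSchroderPath (p : List (ℤ × ℤ)) : Prop := p.Chain' SchroderStep

/-- The set of Schröder paths from `a` to `b`. -/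
def SchroderPaths (a b : ℤ × ℤ) : Set (List (ℤ × ℤ)) :=
  {p | IsSchroderPath p ∧ p.head? = some a ∧ p.getLast? = some b}

/-- `M i j` = number of Schröder paths from `(0, 2i)` to `(2j+1, 2j+1)`. -/
def M (i j : ℕ) : ℕ :=
  Nat.card (SchroderPaths (0, 2 * (i : ℤ)) (2 * (j : ℤ) + 1, 2 * (j : ℤ) + 1))

/-- Formal power series in two variables `u, v` over `ℚ`. -/
abbrev PS : Type := MvPowerSeries (Fin 2) ℚ

def uu : PS := MvPowerSeries.X 0
def vv : PS := MvPowerSeries.X 1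

/-- Coefficient of `u^i v^j`. -/
def cf (i j : ℕ) (f : PS) : ℚ :=
  MvPowerSeries.coeff (Finsupp.single 0 i + Finsupp.single 1 j) f

/-!
Splitting a Schröder path at its first step gives `P(a, b) = [a = b] + ∑ₛ P(a + s, b)` over the
three steps `s`, and `P(a, b)` only depends on `b - a`. Recording the displacement `(m, m - 2i)`
by `u^i v^m` turns this recurrence into `F * (1 - v - uv - uv²) = 1` for the generating series `F`
of path counts. Where a monomial is not divisible by `v`, `uv` or `uv²`, the corresponding
displacement has `Δx < |Δy|`, which no path has, since every step satisfies `|Δy| ≤ Δx`.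
-/

open MvPowerSeries

def schroderSteps : Finset (ℤ × ℤ) := {(1, 1), (1, -1), (2, 0)}

lemma schroderStep_iff {a b : ℤ × ℤ} : SchroderStep a b ↔ b - a ∈ schroderSteps := by
  simp [SchroderStep, schroderSteps]

lemma abs_snd_le_fst_of_mem_schroderSteps {s : ℤ × ℤ} (hs : s ∈ schroderSteps) :
    |s.2| ≤ s.1 := by
  simp only [schroderSteps, Finset.mem_insert, Finset.mem_singleton] at hs
  rcases hs with rfl | rfl | rfl <;> norm_num

lemma one_le_fst_of_mem_schroderSteps {s : ℤ × ℤ} (hs : s ∈ schroderSteps) : 1 ≤ s.1 := by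
  simp only [schroderSteps, Finset.mem_insert, Finset.mem_singleton] at hs
  rcases hs with rfl | rfl | rfl <;> norm_num

lemma mem_schroderPaths {p : List (ℤ × ℤ)} {a b : ℤ × ℤ} :
    p ∈ SchroderPaths a b ↔ p.IsChain SchroderStep ∧ p.head? = some a ∧ p.getLast? = some b :=
  Iff.rfl

lemma cons_mem_schroderPaths {x a b : ℤ × ℤ} {q : List (ℤ × ℤ)} :
    x :: q ∈ SchroderPaths a b ↔
      x = a ∧ (q = [] ∧ a = b ∨ ∃ s ∈ schroderSteps, q ∈ SchroderPaths (a + s) b) := by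
  rcases q with _ | ⟨y, r⟩
  · simp +contextual [mem_schroderPaths]
  · simp only [mem_schroderPaths, List.isChain_cons_cons, schroderStep_iff, List.head?_cons,
      Option.some.injEq, List.getLast?_cons_cons, List.cons_ne_nil, false_and, false_or]
    constructor
    · rintro ⟨⟨hs, hc⟩, rfl, hl⟩
      exact ⟨rfl, y - x, hs, hc, by abel, hl⟩
    · rintro ⟨rfl, s, hs, hc, rfl, hl⟩
      exact ⟨⟨by simpa using hs, hc⟩, rfl, hl⟩

lemma schroderPaths_eq_union (a b : ℤ × ℤ) :
    SchroderPaths a b = (if a = b then {[a]} else ∅) ∪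
      ⋃ s ∈ schroderSteps, List.cons a '' SchroderPaths (a + s) b := by
  ext (_ | ⟨x, q⟩)
  · split_ifs <;> simp [mem_schroderPaths]
  · simp only [cons_mem_schroderPaths, Set.mem_union, Set.mem_iUnion, Set.mem_image,
      List.cons.injEq, exists_prop]
    split_ifs <;> aesop

lemma abs_sub_snd_le_sub_fst_of_mem_schroderPaths {p : List (ℤ × ℤ)} {a b : ℤ × ℤ}
    (hp : p ∈ SchroderPaths a b) :
    |b.2 - a.2| ≤ b.1 - a.1 := by
  induction p generalizing a with
  | nil => simp [mem_schroderPaths] at hp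
  | cons x q ih =>
    obtain ⟨rfl, ⟨-, rfl⟩ | ⟨s, hs, hq⟩⟩ := cons_mem_schroderPaths.1 hp
    · simp
    · have hrest := ih hq
      have hstep := abs_snd_le_fst_of_mem_schroderSteps hs
      simp only [Prod.fst_add, Prod.snd_add] at hrest
      calc |b.2 - x.2| = |(b.2 - (x.2 + s.2)) + s.2| := by ring_nf
        _ ≤ |b.2 - (x.2 + s.2)| + |s.2| := abs_add_le _ _
        _ ≤ b.1 - x.1 := by linarith

lemma schroderPaths_eq_empty_of_lt_abs {a b : ℤ × ℤ} (h : b.1 - a.1 < |b.2 - a.2|) :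
    SchroderPaths a b = ∅ :=
  Set.eq_empty_of_forall_notMem fun _ hp =>
    (abs_sub_snd_le_sub_fst_of_mem_schroderPaths hp).not_gt h

lemma finite_schroderPaths (a b : ℤ × ℤ) : (SchroderPaths a b).Finite := by
  suffices ∀ n : ℕ, ∀ a : ℤ × ℤ, b.1 - a.1 < n → (SchroderPaths a b).Finite from
    this ((b.1 - a.1).toNat + 1) a (by omega)
  intro n
  induction n with
  | zero =>
    intro a ha
    have hneg : b.1 - a.1 < 0 := by simpa using ha
    rw [schroderPaths_eq_empty_of_lt_abs (hneg.trans_le (abs_nonneg _))]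
    exact Set.finite_empty
  | succ n ih =>
    intro a ha
    rw [schroderPaths_eq_union]
    refine .union (by split_ifs <;> simp) (schroderSteps.finite_toSet.biUnion fun s hs => ?_)
    have hstep := one_le_fst_of_mem_schroderSteps hs
    exact (ih (a + s) (by simp only [Prod.fst_add]; omega)).image _

lemma ncard_schroderPaths_eq_sum (a b : ℤ × ℤ) :
    (SchroderPaths a b).ncard =
      (if a = b then 1 else 0) + ∑ s ∈ schroderSteps, (SchroderPaths (a + s) b).ncard := by
  have hdisj : Disjoint (if a = b then {[a]} else ∅ : Set (List (ℤ × ℤ)))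
      (⋃ s ∈ schroderSteps, List.cons a '' SchroderPaths (a + s) b) := by
    split_ifs
    · simp only [Set.disjoint_singleton_left, Set.mem_iUnion, Set.mem_image, List.cons.injEq]
      rintro ⟨s, -, q, hq, -, rfl⟩
      simp [mem_schroderPaths] at hq
    · exact Set.empty_disjoint _
  have hpair : (schroderSteps : Set (ℤ × ℤ)).PairwiseDisjoint
      fun s => List.cons a '' SchroderPaths (a + s) b := by
    intro s _ s' _ hne
    refine Set.disjoint_left.2 ?_
    rintro _ ⟨q, hq, rfl⟩ ⟨q', hq', hqq'⟩
    obtain rfl := List.cons_injective hqq'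
    have hhead := hq.2.1.symm.trans hq'.2.1
    exact hne (add_left_cancel (Option.some_injective _ hhead))
  rw [schroderPaths_eq_union, Set.ncard_union_eq hdisj (by split_ifs <;> simp)
    (schroderSteps.finite_toSet.biUnion fun s _ => (finite_schroderPaths _ _).image _),
    ← Finset.set_biUnion_coe,
    Set.Finite.ncard_biUnion schroderSteps.finite_toSet
      (fun s _ => (finite_schroderPaths _ _).image _) hpair,
    finsum_mem_coe_finset]
  congr 1
  · split_ifs <;> simp
  · exact Finset.sum_congr rfl fun s _ => Set.ncard_image_of_injective _ List.cons_injective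

lemma map_add_mem_schroderPaths {p : List (ℤ × ℤ)} {a b : ℤ × ℤ} (c : ℤ × ℤ)
    (hp : p ∈ SchroderPaths a b) : p.map (· + c) ∈ SchroderPaths (a + c) (b + c) := by
  obtain ⟨hchain, hhead, hlast⟩ := hp
  refine ⟨List.isChain_map_of_isChain _ (fun x y h => ?_) hchain, by simp [hhead], by simp [hlast]⟩
  rwa [schroderStep_iff, add_sub_add_right_eq_sub, ← schroderStep_iff]

lemma ncard_schroderPaths_add (a b c : ℤ × ℤ) :
    (SchroderPaths (a + c) (b + c)).ncard = (SchroderPaths a b).ncard := by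
  have himage : SchroderPaths (a + c) (b + c) = List.map (· + c) '' SchroderPaths a b := by
    refine Set.Subset.antisymm (fun p hp => ?_)
      (Set.image_subset_iff.2 fun p hp => map_add_mem_schroderPaths c hp)
    exact ⟨p.map (· + -c), by simpa using map_add_mem_schroderPaths (-c) hp, by simp⟩
  rw [himage, Set.ncard_image_of_injective _ (List.map_injective_iff.2 (add_left_injective c))]

def schroderCount (t : ℤ × ℤ) : ℕ := (SchroderPaths 0 t).ncard

lemma ncard_schroderPaths (a b : ℤ × ℤ) : (SchroderPaths a b).ncard = schroderCount (b - a) := by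
  rw [schroderCount, ← ncard_schroderPaths_add 0 (b - a) a, zero_add, sub_add_cancel]

lemma schroderCount_eq_sum (t : ℤ × ℤ) :
    schroderCount t = (if t = 0 then 1 else 0) + ∑ s ∈ schroderSteps, schroderCount (t - s) := by
  rw [schroderCount, ncard_schroderPaths_eq_sum]
  simp only [ncard_schroderPaths, zero_add, eq_comm (a := (0 : ℤ × ℤ))]

lemma schroderCount_eq_zero {t : ℤ × ℤ} (h : t.1 < |t.2|) : schroderCount t = 0 := by
  rw [schroderCount, schroderPaths_eq_empty_of_lt_abs (by simpa using h), Set.ncard_empty]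

/-- The monomial `u^i v^m` records the displacement `(m, m - 2i)`; the steps `(1, 1)`, `(1, -1)`,
`(2, 0)` are recorded by `v`, `uv`, `uv²`. -/
def displacement (d : Fin 2 →₀ ℕ) : ℤ × ℤ := (d 1, d 1 - 2 * d 0)

lemma displacement_eq_zero_iff {d : Fin 2 →₀ ℕ} : displacement d = 0 ↔ d = 0 := by
  refine ⟨fun h => ?_, fun h => by simp [h, displacement]⟩
  simp only [displacement, Prod.mk_eq_zero] at h
  ext k
  fin_cases k <;> simp only [Fin.zero_eta, Fin.mk_one, Finsupp.coe_zero, Pi.zero_apply] <;> omega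

def schroderSeries : PS := fun d => schroderCount (displacement d)

lemma coeff_schroderSeries (d : Fin 2 →₀ ℕ) :
    coeff d schroderSeries = schroderCount (displacement d) :=
  rfl

lemma coeff_schroderSeries_mul_monomial (d e : Fin 2 →₀ ℕ) :
    coeff d (schroderSeries * monomial e (1 : ℚ)) =
      schroderCount (displacement d - displacement e) := by
  rw [coeff_mul_monomial, mul_one]
  split_ifs with hed
  · have h0 := hed 0
    have h1 := hed 1
    rw [coeff_schroderSeries]
    congr 2
    ext <;> simp only [displacement, Finsupp.coe_tsub, Pi.sub_apply, Prod.mk_sub_mk] <;> omega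
  · rw [schroderCount_eq_zero, Nat.cast_zero]
    obtain ⟨k, hk⟩ : ∃ k, d k < e k := by
      by_contra! hle
      exact hed hle
    fin_cases k <;>
      simp only [Fin.zero_eta, Fin.mk_one, displacement, Prod.mk_sub_mk, lt_abs] at hk ⊢ <;> omega

lemma sum_schroderSteps {β : Type*} [AddCommMonoid β] (f : ℤ × ℤ → β) :
    ∑ s ∈ schroderSteps, f s = f (1, 1) + f (1, -1) + f (2, 0) := by
  simp [schroderSteps, add_assoc]

lemma schroderSeries_mul_eq_one : schroderSeries * (1 - vv - uu * vv - uu * vv ^ 2) = 1 := by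
  have hmonomials : (1 - vv - uu * vv - uu * vv ^ 2 : PS) =
      1 - monomial (Finsupp.single 1 1) 1 - monomial (Finsupp.single 0 1 + Finsupp.single 1 1) 1
      - monomial (Finsupp.single 0 1 + Finsupp.single 1 2) 1 := by
    simp only [uu, vv, X_pow_eq]
    simp only [X, monomial_mul_monomial, one_mul]
  have hv : displacement (Finsupp.single 1 1) = (1, 1) := by simp [displacement]
  have huv : displacement (Finsupp.single 0 1 + Finsupp.single 1 1) = (1, -1) := by
    simp [displacement]
  have huv2 : displacement (Finsupp.single 0 1 + Finsupp.single 1 2) = (2, 0) := by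
    simp [displacement]
  ext d
  have hrec := schroderCount_eq_sum (displacement d)
  simp only [sum_schroderSteps, displacement_eq_zero_iff] at hrec
  simp only [hmonomials, mul_sub, mul_one, map_sub, coeff_schroderSeries_mul_monomial,
    coeff_schroderSeries, coeff_one, hv, huv, huv2, hrec]
  split_ifs <;> push_cast <;> ring

theorem schroder_count_eq_sigma_coeff (i j : ℕ) :
    (M i j : ℚ) = cf i (2 * j + 1) (1 - vv - uu * vv - uu * vv ^ 2)⁻¹ := by
  have hunit : constantCoeff (1 - vv - uu * vv - uu * vv ^ 2) ≠ 0 := by simp [uu, vv]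
  rw [(MvPowerSeries.inv_eq_iff_mul_eq_one hunit).2 schroderSeries_mul_eq_one, cf,
    coeff_schroderSeries, M, Nat.card_coe_set_eq, ncard_schroderPaths]
  congr 2
  ext <;> simp [displacement]
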